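/- arXiv:1603.05022 — 4 statements merged into one kernel-verified Lean document; each statement's English description precedes it below -/
import Mathlib

section
/- Let f : ℝ → ℝ be twice continuously differentiable on (0,∞) and define ψ : ℝ²∖{0} → ℂ by ψ(x₁,x₂) = f(r)·(x₁+ix₂)/r where r = √(x₁²+x₂²). Then ψ satisfies the steady Gross–Pitaevskii equation Δψ(x) + (1−|ψ(x)|²)ψ(x) = 0 at every point x ≠ 0 if and only if f satisfies the ordinary differential equation f''(r) + f'(r)/r + f(r)(1 − f(r)² − 1/r²) = 0 for every r > 0. -/
/-!
Write `ψ = G(r) z` with `z = x₁ + i x₂` and `G(ρ) = f(ρ)/ρ`. Since `z` is harmonic and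
`∇(G(r)) · ∇z = G'(r) z / r`, one gets `Δψ = (G'' + 3G'/r) z`, and for `G = f/ρ` this is
`(f'' + f'/r - f/r²)/r · z`. As `|ψ| = |f(r)|`, the steady Gross–Pitaevskii expression at `x` equals
the ODE expression at `r = |x|`, divided by `r`, times `z`; on the positive `x₁`-axis `z = r ≠ 0`.
-/

/-- The vortex wave function `ψ(x₁,x₂) = f(r)·(x₁+ix₂)/r`, `r = √(x₁²+x₂²)`,
i.e. `ψ = f(r)e^{iθ}`. -/
noncomputable def vortexPsi (f : ℝ → ℝ) (x₁ x₂ : ℝ) : ℂ :=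
  (f (Real.sqrt (x₁ ^ 2 + x₂ ^ 2)) : ℂ) * (x₁ + x₂ * Complex.I) /
    (Real.sqrt (x₁ ^ 2 + x₂ ^ 2) : ℝ)

/-- The two-dimensional Laplacian `Δψ = ∂²ψ/∂x₁² + ∂²ψ/∂x₂²` of `ψ : ℝ → ℝ → ℂ`. -/
noncomputable def laplacian2 (ψ : ℝ → ℝ → ℂ) (x₁ x₂ : ℝ) : ℂ :=
  deriv (deriv (fun s : ℝ => ψ s x₂)) x₁ + deriv (deriv (fun s : ℝ => ψ x₁ s)) x₂

open Filter Topology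

variable {E : Type*} [NormedAddCommGroup E] [NormedSpace ℝ E]

theorem deriv_deriv_smul_affine {φ φ' : ℝ → ℝ} {φ'' a : ℝ} (w v : E)
    (hφ : ∀ᶠ t in 𝓝 a, HasDerivAt φ (φ' t) t) (hφ' : HasDerivAt φ' φ'' a) :
    deriv (deriv fun t => φ t • (t • w + v)) a = φ'' • (a • w + v) + (2 * φ' a) • w := by
  have hline (t : ℝ) : HasDerivAt (fun t : ℝ => t • w + v) w t := by
    simpa using ((hasDerivAt_id t).smul_const w).add_const v
  have hD : deriv (fun t => φ t • (t • w + v)) =ᶠ[𝓝 a]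
      fun t => φ' t • (t • w + v) + φ t • w := by
    filter_upwards [hφ] with t ht
    exact (ht.smul (hline t)).deriv.trans (add_comm _ _)
  rw [hD.deriv_eq]
  refine ((hφ'.smul (hline a)).add (hφ.self_of_nhds.smul_const w)).deriv.trans ?_
  module

theorem hasDerivAt_sqrt_sq_add_sq {a c : ℝ} (h : 0 < a ^ 2 + c ^ 2) :
    HasDerivAt (fun t => √(t ^ 2 + c ^ 2)) (a / √(a ^ 2 + c ^ 2)) a := by
  have hsq : HasDerivAt (fun t : ℝ => t ^ 2 + c ^ 2) (2 * a) a := by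
    simpa using (hasDerivAt_pow 2 a).add_const (c ^ 2)
  refine ((Real.hasDerivAt_sqrt h.ne').comp a hsq).congr_deriv ?_
  field_simp

theorem hasDerivAt_div_self {g : ℝ → ℝ} {g' ρ : ℝ} (hg : HasDerivAt g g' ρ) (hρ : ρ ≠ 0) :
    HasDerivAt (fun ρ => g ρ / ρ) ((g' - g ρ / ρ) / ρ) ρ := by
  refine (hg.div (hasDerivAt_id ρ) hρ).congr_deriv ?_
  simp only [id]
  field_simp

theorem ContDiffOn.hasDerivAt_and_hasDerivAt_deriv {f : ℝ → ℝ} {s : Set ℝ}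
    (hf : ContDiffOn ℝ 2 f s) (hs : IsOpen s) {x : ℝ} (hx : x ∈ s) :
    HasDerivAt f (deriv f x) x ∧ HasDerivAt (deriv f) (deriv (deriv f) x) x := by
  have hf' : ContDiffOn ℝ 1 (deriv f) s := hf.deriv_of_isOpen hs (by norm_num)
  exact ⟨((hf.differentiableOn (by norm_num)).differentiableAt (hs.mem_nhds hx)).hasDerivAt,
    ((hf'.differentiableOn (by norm_num)).differentiableAt (hs.mem_nhds hx)).hasDerivAt⟩

section Radial

variable {G G' G'' : ℝ → ℝ} {a c r : ℝ}

theorem hasDerivAt_comp_sqrt_sq_add_sq (hG : ∀ ρ, 0 < ρ → HasDerivAt G (G' ρ) ρ)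
    (h : 0 < a ^ 2 + c ^ 2) :
    HasDerivAt (fun t => G √(t ^ 2 + c ^ 2)) (G' √(a ^ 2 + c ^ 2) * (a / √(a ^ 2 + c ^ 2))) a :=
  (hG _ (Real.sqrt_pos.2 h)).comp a (hasDerivAt_sqrt_sq_add_sq h)

theorem hasDerivAt_comp_sqrt_sq_add_sq_mul_div (hG' : ∀ ρ, 0 < ρ → HasDerivAt G' (G'' ρ) ρ)
    (hr : 0 < r) (hrac : r ^ 2 = a ^ 2 + c ^ 2) :
    HasDerivAt (fun t => G' √(t ^ 2 + c ^ 2) * (t / √(t ^ 2 + c ^ 2)))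
      (G'' r * (a / r) ^ 2 + G' r * c ^ 2 / r ^ 3) a := by
  have h : 0 < a ^ 2 + c ^ 2 := hrac ▸ pow_pos hr 2
  have hsqrt : √(a ^ 2 + c ^ 2) = r := by rw [← hrac, Real.sqrt_sq hr.le]
  have hd := (hasDerivAt_comp_sqrt_sq_add_sq hG' h).mul
    ((hasDerivAt_id a).div (hasDerivAt_sqrt_sq_add_sq h) (Real.sqrt_pos.2 h).ne')
  refine hd.congr_deriv ?_
  simp only [hsqrt, id, Pi.div_apply]
  field_simp
  linear_combination G' r * hrac

theorem deriv_deriv_radial_smul_affine (hG : ∀ ρ, 0 < ρ → HasDerivAt G (G' ρ) ρ)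
    (hG' : ∀ ρ, 0 < ρ → HasDerivAt G' (G'' ρ) ρ) (hr : 0 < r) (hrac : r ^ 2 = a ^ 2 + c ^ 2)
    (w v : E) :
    deriv (deriv fun t => G √(t ^ 2 + c ^ 2) • (t • w + v)) a =
      (G'' r * (a / r) ^ 2 + G' r * c ^ 2 / r ^ 3) • (a • w + v) + (2 * (G' r * (a / r))) • w := by
  have h : 0 < a ^ 2 + c ^ 2 := hrac ▸ pow_pos hr 2
  have hsqrt : √(a ^ 2 + c ^ 2) = r := by rw [← hrac, Real.sqrt_sq hr.le]
  have hnear : ∀ᶠ t in 𝓝 a, 0 < t ^ 2 + c ^ 2 :=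
    continuousAt_const.eventually_lt (by fun_prop) h
  have hd := deriv_deriv_smul_affine w v
    (hnear.mono fun t ht => hasDerivAt_comp_sqrt_sq_add_sq hG ht)
    (hasDerivAt_comp_sqrt_sq_add_sq_mul_div hG' hr hrac)
  rwa [hsqrt] at hd

end Radial

open Complex in
theorem laplacian2_radial_mul {G G' G'' : ℝ → ℝ} (hG : ∀ ρ, 0 < ρ → HasDerivAt G (G' ρ) ρ)
    (hG' : ∀ ρ, 0 < ρ → HasDerivAt G' (G'' ρ) ρ) {a b r : ℝ} (hr : 0 < r)
    (hrab : r ^ 2 = a ^ 2 + b ^ 2) :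
    laplacian2 (fun x₁ x₂ => (G √(x₁ ^ 2 + x₂ ^ 2) : ℂ) * (x₁ + x₂ * I)) a b =
      ((G'' r + 3 * G' r / r : ℝ) : ℂ) * (a + b * I) := by
  have hslice₁ : (fun s : ℝ => (G √(s ^ 2 + b ^ 2) : ℂ) * (s + b * I)) =
      fun s => G √(s ^ 2 + b ^ 2) • (s • (1 : ℂ) + b * I) := by
    funext s
    simp only [real_smul, mul_one]
  have hslice₂ : (fun t : ℝ => (G √(a ^ 2 + t ^ 2) : ℂ) * (a + t * I)) =
      fun t => G √(t ^ 2 + a ^ 2) • (t • I + (a : ℂ)) := by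
    funext t
    simp only [add_comm (a ^ 2), real_smul]
    ring
  have hcoef : G'' r * (a / r) ^ 2 + G' r * b ^ 2 / r ^ 3 +
      (G'' r * (b / r) ^ 2 + G' r * a ^ 2 / r ^ 3) = G'' r + G' r / r := by
    field_simp
    linear_combination -(G'' r * r + G' r) * hrab
  have hcoefC := congrArg (fun x : ℝ => (x : ℂ)) hcoef
  rw [laplacian2, hslice₁, hslice₂, deriv_deriv_radial_smul_affine hG hG' hr hrab,
    deriv_deriv_radial_smul_affine hG hG' hr (by linarith)]
  simp only [real_smul] at hcoefC ⊢
  push_cast at hcoefC ⊢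
  linear_combination (a + b * I) * hcoefC

theorem vortexPsi_eq_radial_mul (f : ℝ → ℝ) :
    vortexPsi f = fun x₁ x₂ =>
      ((fun ρ => f ρ / ρ) √(x₁ ^ 2 + x₂ ^ 2) : ℂ) * (x₁ + x₂ * Complex.I) := by
  funext x₁ x₂
  simp only [vortexPsi]
  push_cast
  ring

theorem laplacian2_vortexPsi_add_eq {f : ℝ → ℝ} (hf : ContDiffOn ℝ 2 f (Set.Ioi 0)) {a b r : ℝ}
    (hr : 0 < r) (hrab : r ^ 2 = a ^ 2 + b ^ 2) :
    laplacian2 (vortexPsi f) a b + ((1 - ‖vortexPsi f a b‖ ^ 2 : ℝ) : ℂ) * vortexPsi f a b =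
      (((deriv (deriv f) r + deriv f r / r + f r * (1 - f r ^ 2 - 1 / r ^ 2)) / r : ℝ) : ℂ) *
        (a + b * Complex.I) := by
  have hf₁ (ρ : ℝ) (hρ : 0 < ρ) := (hf.hasDerivAt_and_hasDerivAt_deriv isOpen_Ioi hρ).1
  have hf₂ (ρ : ℝ) (hρ : 0 < ρ) := (hf.hasDerivAt_and_hasDerivAt_deriv isOpen_Ioi hρ).2
  have hG (ρ : ℝ) (hρ : 0 < ρ) := hasDerivAt_div_self (hf₁ ρ hρ) hρ.ne'
  have hG' (ρ : ℝ) (hρ : 0 < ρ) := hasDerivAt_div_self ((hf₂ ρ hρ).sub (hG ρ hρ)) hρ.ne'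
  simp only [Pi.sub_apply] at hG'
  have hsqrt : √(a ^ 2 + b ^ 2) = r := by rw [← hrab, Real.sqrt_sq hr.le]
  have hnorm : ‖(a + b * Complex.I : ℂ)‖ = r := by rw [Complex.norm_add_mul_I, hsqrt]
  rw [vortexPsi_eq_radial_mul, laplacian2_radial_mul hG hG' hr hrab]
  simp only [hsqrt, norm_mul, hnorm, Complex.norm_real, Real.norm_eq_abs]
  have hcoef : (deriv (deriv f) r - (deriv f r - f r / r) / r - (deriv f r - f r / r) / r) / r +
      3 * ((deriv f r - f r / r) / r) / r + (1 - (|f r / r| * r) ^ 2) * (f r / r) =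
      (deriv (deriv f) r + deriv f r / r + f r * (1 - f r ^ 2 - 1 / r ^ 2)) / r := by
    rw [abs_div, abs_of_pos hr, div_mul_cancel₀ _ hr.ne', sq_abs]
    field_simp
    ring
  rw [← hcoef]
  push_cast
  ring

/-- The map `ψ(x₁,x₂) = f(r)·(x₁+ix₂)/r` satisfies the steady Gross–Pitaevskii equation
`Δψ + (1−|ψ|²)ψ = 0` at every `x ≠ 0` if and only if `f` satisfies the ODE
`f'' + f'/r + f(1 − f² − 1/r²) = 0` for every `r > 0`. -/
theorem stmt_0 (f : ℝ → ℝ) (hf : ContDiffOn ℝ 2 f (Set.Ioi (0 : ℝ))) :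
    (∀ x₁ x₂ : ℝ, (x₁, x₂) ≠ (0, 0) →
      laplacian2 (vortexPsi f) x₁ x₂ +
        ((1 - ‖vortexPsi f x₁ x₂‖ ^ 2 : ℝ) : ℂ) * vortexPsi f x₁ x₂ = 0) ↔
    (∀ r : ℝ, 0 < r →
      deriv (deriv f) r + deriv f r / r + f r * (1 - f r ^ 2 - 1 / r ^ 2) = 0) := by
  constructor
  · intro hGP r hr
    have hkey := laplacian2_vortexPsi_add_eq hf hr (a := r) (b := 0) (by ring)
    rw [hGP r 0 (by simp [hr.ne'])] at hkey
    simpa only [Complex.ofReal_zero, zero_mul, add_zero, zero_eq_mul, Complex.ofReal_eq_zero,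
      div_eq_zero_iff, hr.ne', or_false] using hkey
  · intro hODE x₁ x₂ hx
    have hpos : 0 < x₁ ^ 2 + x₂ ^ 2 := by
      rcases not_and_or.mp (Prod.mk_inj.not.mp hx) with h | h <;> positivity
    have hr := Real.sqrt_pos.2 hpos
    rw [laplacian2_vortexPsi_add_eq hf hr (Real.sq_sqrt hpos.le), hODE _ hr]
    simp
end

section
/- Define the Padé approximant ρ₂(r) = ((11/32)r² + (11/384)r⁴)/(1 + (1/3)r² + (11/384)r⁴) (these coefficients are a₁ = 11/32, b₁ = (5−32a₁)/(48−192a₁) = 1/3, a₂ = a₁(b₁−1/4) = 11/384). Let E₂(r) = ρ₂''(r) + ρ₂'(r)/r − (ρ₂'(r))²/(2ρ₂(r)) − 2ρ₂(r)/r² + 2(1 − ρ₂(r))ρ₂(r) be the residual of the density equation. Then lim_{r→0⁺} E₂(r)/r⁶ = 0. -/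
/-!
With `q = 384 + 128 r² + 11 r⁴` we have `ρ₂ = 11 r² (12 + r²) / q`, so the quotient rule gives
`ρ₂'` and `ρ₂''` as rational functions with denominators `q²` and `q³`. Clearing denominators,
`E₂(r)/r⁶` is a rational function whose numerator carries the factor `r²` and whose denominator
`(12 + r²) q³` has no real zeros, so it is continuous at `0` with value `0`.
-/

/-- The order-2 diagonal Padé approximant of the vortex density,
with coefficients `a₁ = 11/32`, `b₁ = 1/3`, `a₂ = 11/384`. -/
noncomputable def rho2 (r : ℝ) : ℝ :=
  ((11 / 32) * r ^ 2 + (11 / 384) * r ^ 4) / (1 + (1 / 3) * r ^ 2 + (11 / 384) * r ^ 4)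

/-- The residual of the density equation for `rho2`. -/
noncomputable def E2 (r : ℝ) : ℝ :=
  deriv (deriv rho2) r + deriv rho2 r / r - (deriv rho2 r) ^ 2 / (2 * rho2 r)
    - 2 * rho2 r / r ^ 2 + 2 * (1 - rho2 r) * rho2 r

noncomputable def rho2Den (r : ℝ) : ℝ := 384 + 128 * r ^ 2 + 11 * r ^ 4

lemma rho2Den_pos (r : ℝ) : 0 < rho2Den r := by unfold rho2Den; positivity

lemma hasDerivAt_rho2Den (r : ℝ) : HasDerivAt rho2Den (256 * r + 44 * r ^ 3) r := by
  refine (((hasDerivAt_pow 2 r).const_mul 128).const_add 384 |>.add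
    ((hasDerivAt_pow 4 r).const_mul 11)).congr_deriv ?_
  push_cast
  ring

lemma rho2_eq_div : rho2 = fun r => 11 * r ^ 2 * (12 + r ^ 2) / rho2Den r := by
  ext r
  have := rho2Den_pos r
  unfold rho2 rho2Den at *
  field_simp
  ring

lemma hasDerivAt_rho2 (r : ℝ) :
    HasDerivAt rho2 (88 * r * (1152 + 192 * r ^ 2 - r ^ 4) / rho2Den r ^ 2) r := by
  have hnum : HasDerivAt (fun r : ℝ => 11 * r ^ 2 * (12 + r ^ 2)) (264 * r + 44 * r ^ 3) r := by
    refine (((hasDerivAt_pow 2 r).const_mul 11).mul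
      ((hasDerivAt_pow 2 r).const_add 12)).congr_deriv ?_
    push_cast
    ring
  rw [rho2_eq_div]
  refine (hnum.div (hasDerivAt_rho2Den r) (rho2Den_pos r).ne').congr_deriv ?_
  unfold rho2Den
  ring

lemma deriv_rho2 : deriv rho2 = fun r => 88 * r * (1152 + 192 * r ^ 2 - r ^ 4) / rho2Den r ^ 2 :=
  funext fun r => (hasDerivAt_rho2 r).deriv

lemma hasDerivAt_deriv_rho2 (r : ℝ) :
    HasDerivAt (deriv rho2) (88 * ((1152 + 576 * r ^ 2 - 5 * r ^ 4) * rho2Den r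
      - 2 * (1152 * r + 192 * r ^ 3 - r ^ 5) * (256 * r + 44 * r ^ 3)) / rho2Den r ^ 3) r := by
  have hnum : HasDerivAt (fun r : ℝ => 88 * r * (1152 + 192 * r ^ 2 - r ^ 4))
      (88 * (1152 + 576 * r ^ 2 - 5 * r ^ 4)) r := by
    refine (((hasDerivAt_id r).const_mul 88).mul
      ((((hasDerivAt_pow 2 r).const_mul 192).const_add 1152).sub
        (hasDerivAt_pow 4 r))).congr_deriv ?_
    simp only [Pi.sub_apply, id]
    push_cast
    ring
  rw [deriv_rho2]
  refine (hnum.div ((hasDerivAt_rho2Den r).pow 2)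
    (pow_ne_zero 2 (rho2Den_pos r).ne')).congr_deriv ?_
  have := (rho2Den_pos r).ne'
  simp only [Pi.pow_apply]
  field_simp
  ring

lemma E2_div_pow_six {r : ℝ} (hr : r ≠ 0) :
    E2 r / r ^ 6 = -66 * r ^ 2 * (4416 + 992 * r ^ 2 + 55 * r ^ 4) /
      ((12 + r ^ 2) * rho2Den r ^ 3) := by
  have hden := (rho2Den_pos r).ne'
  rw [E2, (hasDerivAt_deriv_rho2 r).deriv, deriv_rho2, rho2_eq_div]
  field_simp
  unfold rho2Den
  ring

/-- The residual of the density equation for the order-2 Padé approximant vanishes to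
order higher than `r⁶` at the origin: `lim_{r→0⁺} E₂(r)/r⁶ = 0`. -/
theorem stmt_3 :
    Filter.Tendsto (fun r : ℝ => E2 r / r ^ 6) (nhdsWithin 0 (Set.Ioi 0)) (nhds 0) := by
  have hcont : Continuous fun r : ℝ => -66 * r ^ 2 * (4416 + 992 * r ^ 2 + 55 * r ^ 4) /
      ((12 + r ^ 2) * rho2Den r ^ 3) := by
    refine Continuous.div (by fun_prop) (by unfold rho2Den; fun_prop) fun r => ?_
    have := rho2Den_pos r
    positivity
  refine ((hcont.tendsto' 0 0 (by simp)).mono_left nhdsWithin_le_nhds).congr' ?_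
  filter_upwards [self_mem_nhdsWithin] with r hr
  exact (E2_div_pow_six (Set.mem_Ioi.mp hr).ne').symm
end

section
/- Let a₁ ∈ (0.34003812, 0.34003813) satisfy 21233664a₁⁵ − 9732096a₁⁴ − 62464a₁³ + 137856a₁² + 62772a₁ − 1247 = 0, and assume 7680a₁² − 1680a₁ − 330 ≠ 0 and 4608a₁ − 1152 ≠ 0. Define b₁ = (2304a₁³ + 656a₁² − 421a₁ − 28)/(7680a₁² − 1680a₁ − 330), a₂ = a₁(b₁ − 1/4), b₂ = (768a₁b₁ − 120b₁ − 384a₁² + 8a₁ + 7)/(4608a₁ − 1152), a₃ = a₁(192b₂ − 48b₁ + 16a₁ + 5)/192, and ρ₃(r) = (a₁r² + a₂r⁴ + a₃r⁶)/(1 + b₁r² + b₂r⁴ + a₃r⁶). Let E₃(r) = ρ₃''(r) + ρ₃'(r)/r − (ρ₃'(r))²/(2ρ₃(r)) − 2ρ₃(r)/r² + 2(1 − ρ₃(r))ρ₃(r). Then lim_{r→0⁺} E₃(r)/r¹⁰ = 0. -/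
/-!
Write `ρ₃ = P / Q` with `P = X² (a₁ + a₂ X² + a₃ X⁴)` and `Q = 1 + b₁ X² + b₂ X⁴ + a₃ X⁶`.
Clearing denominators, `E₃ = N / (2 r² P Q³)` for a polynomial `N` built from `P`, `Q` and the
Wronskian `Q P' - Q' P`. Since `a₁ ≠ 0` (it is a root of a quintic with nonzero constant term),
the denominator vanishes to order exactly `4` at `0`, so it suffices that `X¹⁵` divides `N`.
The Padé conditions are precisely the vanishing of the coefficients of `r⁶, …, r¹⁴` of `N`, which
gives `X¹⁶ ∣ N`.
-/

open Polynomial Filter Topology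

noncomputable def vortexOperator (ρ : ℝ → ℝ) (r : ℝ) : ℝ :=
  deriv (deriv ρ) r + deriv ρ r / r - deriv ρ r ^ 2 / (2 * ρ r) - 2 * ρ r / r ^ 2
    + 2 * (1 - ρ r) * ρ r

noncomputable def residualNumerator (P Q : ℝ[X]) : ℝ[X] :=
  2 * X ^ 2 * P * (derivative (wronskian Q P) * Q - 2 * wronskian Q P * derivative Q)
    + 2 * X * P * wronskian Q P * Q - X ^ 2 * wronskian Q P ^ 2 - 4 * P ^ 2 * Q ^ 2
    + 4 * X ^ 2 * P ^ 2 * (Q - P) * Q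

theorem hasDerivAt_eval_div_eval {p q : ℝ[X]} {x : ℝ} (hq : q.eval x ≠ 0) :
    HasDerivAt (fun y => p.eval y / q.eval y) ((wronskian q p).eval x / (q ^ 2).eval x) x := by
  refine ((p.hasDerivAt x).div (q.hasDerivAt x) hq).congr_deriv ?_
  simp only [wronskian, eval_sub, eval_mul, eval_pow]
  ring

theorem deriv_eval_div_eval_eventuallyEq {p q : ℝ[X]} {x : ℝ} (hq : q.eval x ≠ 0) :
    deriv (fun y => p.eval y / q.eval y)
      =ᶠ[𝓝 x] fun y => (wronskian q p).eval y / (q ^ 2).eval y := by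
  filter_upwards [q.continuous.continuousAt.eventually_ne hq] with y hy
  exact (hasDerivAt_eval_div_eval hy).deriv

theorem vortexOperator_eval_div_eval {P Q : ℝ[X]} {r : ℝ} (hr : r ≠ 0) (hP : P.eval r ≠ 0)
    (hQ : Q.eval r ≠ 0) :
    vortexOperator (fun y => P.eval y / Q.eval y) r
      = (residualNumerator P Q).eval r / (2 * r ^ 2 * P.eval r * Q.eval r ^ 3) := by
  have hQ2 : (Q ^ 2).eval r ≠ 0 := by simpa using pow_ne_zero 2 hQ
  rw [vortexOperator, (deriv_eval_div_eval_eventuallyEq hQ).deriv_eq,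
    (hasDerivAt_eval_div_eval hQ2).deriv, (hasDerivAt_eval_div_eval hQ).deriv]
  simp only [residualNumerator, wronskian, derivative_mul, derivative_sub, derivative_pow,
    eval_mul, eval_sub, eval_add, eval_pow, eval_X, eval_ofNat, eval_C]
  field_simp
  ring

theorem tendsto_vortexOperator_div_pow {p Q : ℝ[X]} {n : ℕ} (hp : p.eval 0 ≠ 0)
    (hQ : Q.eval 0 ≠ 0) (hN : X ^ (n + 5) ∣ residualNumerator (X ^ 2 * p) Q) :
    Tendsto (fun r => vortexOperator (fun y => (X ^ 2 * p).eval y / Q.eval y) r / r ^ n)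
      (𝓝[>] 0) (𝓝 0) := by
  obtain ⟨M, hM⟩ := hN
  have hlim : Tendsto (fun r => r * M.eval r / (2 * p.eval r * Q.eval r ^ 3)) (𝓝[>] 0) (𝓝 0) := by
    have hcont : ContinuousAt (fun r => r * M.eval r / (2 * p.eval r * Q.eval r ^ 3)) 0 := by
      fun_prop (disch := simp [hp, hQ])
    simpa using hcont.tendsto.mono_left nhdsWithin_le_nhds
  refine hlim.congr' ?_
  filter_upwards [self_mem_nhdsWithin,
    nhdsWithin_le_nhds (p.continuous.continuousAt.eventually_ne hp),
    nhdsWithin_le_nhds (Q.continuous.continuousAt.eventually_ne hQ)] with r hr_pos hpr hQr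
  have hr : r ≠ 0 := hr_pos.ne'
  rw [vortexOperator_eval_div_eval hr (by simp [hpr, hr]) hQr, hM]
  simp only [eval_mul, eval_pow, eval_X]
  field_simp
  ring

theorem X_pow_sixteen_dvd_residualNumerator_of_pade {a₁ b₁ a₂ b₂ a₃ : ℝ}
    (ha₁_root : 21233664 * a₁ ^ 5 - 9732096 * a₁ ^ 4 - 62464 * a₁ ^ 3
      + 137856 * a₁ ^ 2 + 62772 * a₁ - 1247 = 0)
    (hden₁ : 7680 * a₁ ^ 2 - 1680 * a₁ - 330 ≠ 0)
    (hden₂ : 4608 * a₁ - 1152 ≠ 0)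
    (hb₁ : b₁ = (2304 * a₁ ^ 3 + 656 * a₁ ^ 2 - 421 * a₁ - 28)
      / (7680 * a₁ ^ 2 - 1680 * a₁ - 330))
    (ha₂ : a₂ = a₁ * (b₁ - 1 / 4))
    (hb₂ : b₂ = (768 * a₁ * b₁ - 120 * b₁ - 384 * a₁ ^ 2 + 8 * a₁ + 7)
      / (4608 * a₁ - 1152))
    (ha₃ : a₃ = a₁ * (192 * b₂ - 48 * b₁ + 16 * a₁ + 5) / 192) :
    X ^ 16 ∣ residualNumerator (X ^ 2 * (C a₁ + C a₂ * X ^ 2 + C a₃ * X ^ 4))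
      (1 + C b₁ * X ^ 2 + C b₂ * X ^ 4 + C a₃ * X ^ 6) := by
  have hB₁ : b₁ * (7680 * a₁ ^ 2 - 1680 * a₁ - 330)
      = 2304 * a₁ ^ 3 + 656 * a₁ ^ 2 - 421 * a₁ - 28 := by
    rw [hb₁, div_mul_cancel₀ _ hden₁]
  have hB₂ : b₂ * (4608 * a₁ - 1152)
      = 768 * a₁ * b₁ - 120 * b₁ - 384 * a₁ ^ 2 + 8 * a₁ + 7 := by
    rw [hb₂, div_mul_cancel₀ _ hden₂]
  -- the quotient collects the coefficients of `r¹⁶, …, r²⁴` of the residual numerator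
  refine ⟨C 4 * (C (-3 * a₁ ^ 2 * a₂ * a₃ + 3 * a₁ ^ 2 * a₃ ^ 2 - a₁ ^ 2 * a₃ * b₂
      - 3 * a₁ * a₂ ^ 2 * b₂ - 2 * a₁ * a₂ * a₃ * b₁ - 2 * a₁ * a₂ * a₃ * b₂ + 2 * a₁ * a₂ * b₂ ^ 2
      - 12 * a₁ * a₃ ^ 2 * b₁ + a₁ * a₃ ^ 2 + 4 * a₁ * a₃ * b₁ * b₂ + 4 * a₁ * a₃ * b₂ ^ 2
      - a₂ ^ 3 * b₁ - 12 * a₂ ^ 2 * a₃ * b₁ - a₂ ^ 2 * a₃ + 2 * a₂ ^ 2 * b₁ * b₂ - a₂ ^ 2 * b₂ ^ 2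
      - 42 * a₂ * a₃ ^ 2 + 2 * a₂ * a₃ * b₁ ^ 2 - 2 * a₂ * a₃ * b₁ * b₂ + 4 * a₂ * a₃ * b₂
      + 3 * a₃ ^ 2 * b₁ ^ 2 + 2 * a₃ ^ 2 * b₁ - 4 * a₃ ^ 2 * b₂)
    + C (-2 * a₁ ^ 2 * a₃ ^ 2 - 3 * a₁ * a₂ ^ 2 * a₃ + 4 * a₁ * a₂ * a₃ ^ 2 - 2 * a₁ * a₂ * a₃ * b₂
      + a₁ * a₃ ^ 2 * b₁ + 4 * a₁ * a₃ ^ 2 * b₂ + 2 * a₁ * a₃ * b₂ ^ 2 - a₂ ^ 3 * b₂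
      - a₂ ^ 2 * a₃ * b₁ - 4 * a₂ ^ 2 * a₃ * b₂ + a₂ ^ 2 * b₂ ^ 2 - 20 * a₂ * a₃ ^ 2 * b₁
      + a₂ * a₃ ^ 2 + 4 * a₂ * a₃ * b₁ * b₂ - 20 * a₃ ^ 3 + a₃ ^ 2 * b₁ ^ 2 + 2 * a₃ ^ 2 * b₂) * X ^ 2
    + C (-4 * a₁ * a₂ * a₃ ^ 2 + 6 * a₁ * a₃ ^ 3 + a₁ * a₃ ^ 2 * b₂ - a₂ ^ 3 * a₃ - a₂ ^ 2 * a₃ * b₂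
      + a₂ * a₃ ^ 2 * b₁ - 6 * a₂ * a₃ ^ 2 * b₂ + 2 * a₂ * a₃ * b₂ ^ 2 - 10 * a₃ ^ 3 * b₁ + a₃ ^ 3
      + 2 * a₃ ^ 2 * b₁ * b₂) * X ^ 4
    + C (-a₁ * a₃ ^ 3 - 2 * a₂ ^ 2 * a₃ ^ 2 + a₂ * a₃ ^ 2 * b₂ + a₃ ^ 3 * b₁ - 4 * a₃ ^ 3 * b₂
      + a₃ ^ 2 * b₂ ^ 2) * X ^ 6
    + C (-a₂ * a₃ ^ 3 - a₃ ^ 4 + a₃ ^ 3 * b₂) * X ^ 8), Polynomial.funext fun r => ?_⟩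
  simp only [residualNumerator, wronskian, derivative_mul, derivative_add, derivative_sub,
    derivative_X_pow, derivative_C, derivative_one, derivative_zero, eval_mul, eval_add, eval_sub,
    eval_pow, eval_X, eval_C, eval_one, eval_zero, eval_ofNat, Nat.cast_ofNat, Nat.reduceSub]
  subst ha₂ ha₃
  refine mul_right_cancel₀ (mul_ne_zero hden₁ hden₂) ?_
  -- Coefficientwise: `r⁶` and `r⁸` cancel identically once `a₂, a₃` are substituted,
  -- `r¹⁰` through `b₂`, `r¹²` through `b₁` and `b₂`, and `r¹⁴` through the quintic.
  linear_combination r ^ 10 * (-(a₁ ^ 2 / 48) * (7680 * a₁ ^ 2 - 1680 * a₁ - 330)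
        * (4608 * a₁ - 1152)) * hB₂
    + r ^ 12 * (7680 * a₁ ^ 2 - 1680 * a₁ - 330)
      * ((-224 * a₁ ^ 3 * b₁ + 122 / 3 * a₁ ^ 3 + 56 * a₁ ^ 2 * b₁ - 23 / 3 * a₁ ^ 2) * hB₂
        - 2 / 3 * a₁ ^ 2 * hB₁)
    + r ^ 14 * ((7680 * a₁ ^ 2 - 1680 * a₁ - 330)
        * (-(a₁ ^ 2 / 32) * b₂ * (4608 * a₁ - 1152) - 16 * a₁ ^ 4 - 176 * a₁ ^ 3 * b₁ ^ 2
          + 284 / 3 * a₁ ^ 3 * b₁ - 23 / 4 * a₁ ^ 3 + 44 * a₁ ^ 2 * b₁ ^ 2 - 209 / 12 * a₁ ^ 2 * b₁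
          + 39 / 32 * a₁ ^ 2) * hB₂
      + (-(5 / 3) * a₁ ^ 2 * b₁ * (7680 * a₁ ^ 2 - 1680 * a₁ - 330) + 2304 * a₁ ^ 5
          + 1552 * a₁ ^ 4 - 617 * a₁ ^ 3 - 133 / 2 * a₁ ^ 2) * hB₁
      + a₁ ^ 2 * (4 * a₁ - 1) / 16 * ha₁_root)

theorem stmt_9_general (a₁ b₁ a₂ b₂ a₃ : ℝ) (ρ₃ E₃ : ℝ → ℝ)
    (ha₁_root : 21233664 * a₁ ^ 5 - 9732096 * a₁ ^ 4 - 62464 * a₁ ^ 3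
      + 137856 * a₁ ^ 2 + 62772 * a₁ - 1247 = 0)
    (hden₁ : 7680 * a₁ ^ 2 - 1680 * a₁ - 330 ≠ 0)
    (hden₂ : 4608 * a₁ - 1152 ≠ 0)
    (hb₁ : b₁ = (2304 * a₁ ^ 3 + 656 * a₁ ^ 2 - 421 * a₁ - 28)
      / (7680 * a₁ ^ 2 - 1680 * a₁ - 330))
    (ha₂ : a₂ = a₁ * (b₁ - 1 / 4))
    (hb₂ : b₂ = (768 * a₁ * b₁ - 120 * b₁ - 384 * a₁ ^ 2 + 8 * a₁ + 7)
      / (4608 * a₁ - 1152))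
    (ha₃ : a₃ = a₁ * (192 * b₂ - 48 * b₁ + 16 * a₁ + 5) / 192)
    (hρ₃ : ∀ r : ℝ, ρ₃ r = (a₁ * r ^ 2 + a₂ * r ^ 4 + a₃ * r ^ 6)
      / (1 + b₁ * r ^ 2 + b₂ * r ^ 4 + a₃ * r ^ 6))
    (hE₃ : ∀ r : ℝ, E₃ r = deriv (deriv ρ₃) r + deriv ρ₃ r / r
      - (deriv ρ₃ r) ^ 2 / (2 * ρ₃ r) - 2 * ρ₃ r / r ^ 2 + 2 * (1 - ρ₃ r) * ρ₃ r) :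
    Filter.Tendsto (fun r : ℝ => E₃ r / r ^ 10) (nhdsWithin 0 (Set.Ioi 0)) (nhds 0) := by
  have ha₁ : a₁ ≠ 0 := by
    rintro rfl
    norm_num at ha₁_root
  have hE : E₃ = vortexOperator ρ₃ := funext hE₃
  have hρ : ρ₃ = fun y => (X ^ 2 * (C a₁ + C a₂ * X ^ 2 + C a₃ * X ^ 4)).eval y
      / (1 + C b₁ * X ^ 2 + C b₂ * X ^ 4 + C a₃ * X ^ 6).eval y := by
    funext y
    simp only [hρ₃, eval_mul, eval_add, eval_pow, eval_X, eval_C, eval_one]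
    ring
  subst hE hρ
  refine tendsto_vortexOperator_div_pow (n := 10) (by simpa using ha₁) (by simp) ?_
  exact (pow_dvd_pow X (by norm_num)).trans
    (X_pow_sixteen_dvd_residualNumerator_of_pade ha₁_root hden₁ hden₂ hb₁ ha₂ hb₂ ha₃)

/-- For the order-3 diagonal Padé approximant `ρ₃` of the vortex density, built from the
physically acceptable root `a₁ ≈ 0.34003812` of the associated quintic, the residual
`E₃` of the density equation satisfies `lim_{r→0⁺} E₃(r)/r¹⁰ = 0`. -/
theorem stmt_9 (a₁ b₁ a₂ b₂ a₃ : ℝ) (ρ₃ E₃ : ℝ → ℝ)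
    (ha₁_mem : a₁ ∈ Set.Ioo (0.34003812 : ℝ) 0.34003813)
    (ha₁_root : 21233664 * a₁ ^ 5 - 9732096 * a₁ ^ 4 - 62464 * a₁ ^ 3
      + 137856 * a₁ ^ 2 + 62772 * a₁ - 1247 = 0)
    (hden₁ : 7680 * a₁ ^ 2 - 1680 * a₁ - 330 ≠ 0)
    (hden₂ : 4608 * a₁ - 1152 ≠ 0)
    (hb₁ : b₁ = (2304 * a₁ ^ 3 + 656 * a₁ ^ 2 - 421 * a₁ - 28)
      / (7680 * a₁ ^ 2 - 1680 * a₁ - 330))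
    (ha₂ : a₂ = a₁ * (b₁ - 1 / 4))
    (hb₂ : b₂ = (768 * a₁ * b₁ - 120 * b₁ - 384 * a₁ ^ 2 + 8 * a₁ + 7)
      / (4608 * a₁ - 1152))
    (ha₃ : a₃ = a₁ * (192 * b₂ - 48 * b₁ + 16 * a₁ + 5) / 192)
    (hρ₃ : ∀ r : ℝ, ρ₃ r = (a₁ * r ^ 2 + a₂ * r ^ 4 + a₃ * r ^ 6)
      / (1 + b₁ * r ^ 2 + b₂ * r ^ 4 + a₃ * r ^ 6))
    (hE₃ : ∀ r : ℝ, E₃ r = deriv (deriv ρ₃) r + deriv ρ₃ r / r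
      - (deriv ρ₃ r) ^ 2 / (2 * ρ₃ r) - 2 * ρ₃ r / r ^ 2 + 2 * (1 - ρ₃ r) * ρ₃ r) :
    Filter.Tendsto (fun r : ℝ => E₃ r / r ^ 10) (nhdsWithin 0 (Set.Ioi 0)) (nhds 0) :=
  stmt_9_general a₁ b₁ a₂ b₂ a₃ ρ₃ E₃ ha₁_root hden₁ hden₂ hb₁ ha₂ hb₂ ha₃ hρ₃ hE₃
end

section
/- Let m ≥ 3 and let h₁,…,h_{m−1} be strictly positive real numbers. Define the m×m real tridiagonal matrix A₁ by: (A₁)_{1,1} = −2/h₁², (A₁)_{1,2} = 2/h₁²; for 2 ≤ i ≤ m−1, (A₁)_{i,i−1} = 2/(h_{i−1}(h_{i−1}+h_i)), (A₁)_{i,i} = −2/(h_{i−1}h_i), (A₁)_{i,i+1} = 2/(h_i(h_{i−1}+h_i)); (A₁)_{m,m−1} = 2/h_{m−1}², (A₁)_{m,m} = −2/h_{m−1}²; and all other entries zero. Let W₁ be the diagonal matrix with diagonal entries (h₁, h₁+h₂, h₂+h₃, …, h_{m−2}+h_{m−1}, h_{m−1}). Then the matrix W₁A₁ is symmetric. 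-/
/-!
`W₁A₁` is tridiagonal, and both of its entries coupling neighbouring nodes `i`, `i + 1` equal
`2 / h (i + 1)`: in an interior row the weight `h i + h (i + 1)` cancels the same factor in the
denominator of the stencil, and in a boundary row `h * (2 / h ^ 2) = 2 / h`.
-/

open Matrix

theorem Matrix.IsSymm.of_lt {n α : Type*} [LinearOrder n] {M : Matrix n n α}
    (hM : ∀ i j, i < j → M j i = M i j) : M.IsSymm :=
  IsSymm.ext fun i j => by
    rcases lt_trichotomy i j with hij | rfl | hij
    · exact hM i j hij
    · rfl
    · exact (hM j i hij).symm

theorem mul_div_sq_self {K : Type*} [Field K] (x c : K) : x * (c / x ^ 2) = c / x := by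
  rcases eq_or_ne x 0 with rfl | hx
  · simp
  · field_simp

theorem mul_div_mul_self_right {K : Type*} [Field K] {x : K} (y c : K) (hx : x ≠ 0) :
    x * (c / (y * x)) = c / y := by
  rw [← div_div, mul_div_cancel₀ _ hx]

section NeumannLaplacian

variable (m : ℕ) (h : ℕ → ℝ)

/-- Row `i` of the matrix is row `i + 1` of the paper, while the steps keep the paper's
indices: `h 1, …, h (m - 1)`. -/
noncomputable def neumannLaplacian : Matrix (Fin m) (Fin m) ℝ := Matrix.of fun i j : Fin m =>
  if i.val = 0 then
    if j.val = 0 then -2 / (h 1) ^ 2 else if j.val = 1 then 2 / (h 1) ^ 2 else 0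
  else if i.val = m - 1 then
    if j.val = m - 2 then 2 / (h (m - 1)) ^ 2
    else if j.val = m - 1 then -2 / (h (m - 1)) ^ 2 else 0
  else
    if j.val = i.val - 1 then 2 / (h i.val * (h i.val + h (i.val + 1)))
    else if j.val = i.val then -2 / (h i.val * h (i.val + 1))
    else if j.val = i.val + 1 then 2 / (h (i.val + 1) * (h i.val + h (i.val + 1)))
    else 0

noncomputable def trapezoidWeights (i : Fin m) : ℝ :=
  if i.val = 0 then h 1
  else if i.val = m - 1 then h (m - 1)
  else h i.val + h (i.val + 1)

variable {m}

theorem neumannLaplacian_eq_zero {i j : Fin m} (hij : i.val + 1 < j.val) :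
    neumannLaplacian m h i j = 0 ∧ neumannLaplacian m h j i = 0 := by
  constructor <;>
  · simp only [neumannLaplacian, of_apply]
    split_ifs <;> first | rfl | omega

theorem trapezoidWeights_mul_neumannLaplacian_succ
    (hpos : ∀ i : ℕ, 1 ≤ i → i ≤ m - 1 → 0 < h i) {i j : Fin m} (hij : j.val = i.val + 1) :
    trapezoidWeights m h i * neumannLaplacian m h i j = 2 / h j.val ∧
      trapezoidWeights m h j * neumannLaplacian m h j i = 2 / h j.val := by
  have hsum : ∀ k : ℕ, 1 ≤ k → k + 1 ≤ m - 1 → h k + h (k + 1) ≠ 0 := fun k hk hk' =>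
    (add_pos (hpos k hk (by omega)) (hpos (k + 1) (by omega) hk')).ne'
  constructor
  · simp only [trapezoidWeights, neumannLaplacian, of_apply, hij]
    split_ifs <;> first | contradiction | omega | skip
    · rw [show i.val + 1 = 1 by omega, mul_div_sq_self]
    · exact mul_div_mul_self_right _ _ (hsum i.val (by omega) (by omega))
  · simp only [trapezoidWeights, neumannLaplacian, of_apply, hij]
    split_ifs <;> first | contradiction | omega | skip
    · rw [show i.val + 1 = m - 1 by omega, mul_div_sq_self]
    · exact mul_div_mul_self_right _ _ (hsum (i.val + 1) (by omega) (by omega))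

theorem diagonal_trapezoidWeights_mul_neumannLaplacian_isSymm
    (hpos : ∀ i : ℕ, 1 ≤ i → i ≤ m - 1 → 0 < h i) :
    (diagonal (trapezoidWeights m h) * neumannLaplacian m h).IsSymm := by
  refine IsSymm.of_lt fun i j hij => ?_
  simp only [diagonal_mul]
  rcases (Nat.succ_le_of_lt hij).eq_or_lt with hsucc | hgap
  · obtain ⟨hfwd, hbwd⟩ := trapezoidWeights_mul_neumannLaplacian_succ h hpos hsucc.symm
    rw [hfwd, hbwd]
  · obtain ⟨hfwd, hbwd⟩ := neumannLaplacian_eq_zero h hgap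
    rw [hfwd, hbwd, mul_zero, mul_zero]

end NeumannLaplacian

theorem stmt_16_general (m : ℕ) (h : ℕ → ℝ)
    (hpos : ∀ i : ℕ, 1 ≤ i → i ≤ m - 1 → 0 < h i) :
    let A₁ : Matrix (Fin m) (Fin m) ℝ := Matrix.of fun i j : Fin m =>
      if i.val = 0 then
        if j.val = 0 then -2 / (h 1) ^ 2 else if j.val = 1 then 2 / (h 1) ^ 2 else 0
      else if i.val = m - 1 then
        if j.val = m - 2 then 2 / (h (m - 1)) ^ 2
        else if j.val = m - 1 then -2 / (h (m - 1)) ^ 2 else 0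
      else
        if j.val = i.val - 1 then 2 / (h i.val * (h i.val + h (i.val + 1)))
        else if j.val = i.val then -2 / (h i.val * h (i.val + 1))
        else if j.val = i.val + 1 then 2 / (h (i.val + 1) * (h i.val + h (i.val + 1)))
        else 0
    let W₁ : Matrix (Fin m) (Fin m) ℝ := Matrix.diagonal fun i : Fin m =>
      if i.val = 0 then h 1
      else if i.val = m - 1 then h (m - 1)
      else h i.val + h (i.val + 1)
    (W₁ * A₁).IsSymm :=
  diagonal_trapezoidWeights_mul_neumannLaplacian_isSymm h hpos

/-- The nonuniform finite difference Laplacian `A₁` (with homogeneous Neumann boundary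
conditions, grid steps `h₁,…,h_{m−1} > 0`) is symmetrized by the diagonal matrix `W₁` of
trapezoidal weights `(h₁, h₁+h₂, …, h_{m−2}+h_{m−1}, h_{m−1})`: the matrix `W₁A₁` is
symmetric. Rows are indexed by `i : Fin m`, with `i.val = 0` corresponding to the first
row and `i.val = m−1` to the last row of the statement. -/
theorem stmt_16 (m : ℕ) (hm : 3 ≤ m) (h : ℕ → ℝ)
    (hpos : ∀ i : ℕ, 1 ≤ i → i ≤ m - 1 → 0 < h i) :
    let A₁ : Matrix (Fin m) (Fin m) ℝ := Matrix.of fun i j : Fin m =>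
      if i.val = 0 then
        if j.val = 0 then -2 / (h 1) ^ 2 else if j.val = 1 then 2 / (h 1) ^ 2 else 0
      else if i.val = m - 1 then
        if j.val = m - 2 then 2 / (h (m - 1)) ^ 2
        else if j.val = m - 1 then -2 / (h (m - 1)) ^ 2 else 0
      else
        if j.val = i.val - 1 then 2 / (h i.val * (h i.val + h (i.val + 1)))
        else if j.val = i.val then -2 / (h i.val * h (i.val + 1))
        else if j.val = i.val + 1 then 2 / (h (i.val + 1) * (h i.val + h (i.val + 1)))
        else 0
    let W₁ : Matrix (Fin m) (Fin m) ℝ := Matrix.diagonal fun i : Fin m =>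
      if i.val = 0 then h 1
      else if i.val = m - 1 then h (m - 1)
      else h i.val + h (i.val + 1)
    (W₁ * A₁).IsSymm :=
  stmt_16_general m h hpos
end
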